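/- Differential equation for B: the series B = (1−x)/(A^{(x−1)/2} − x) satisfies (1 + x + xt − xA) · ∂B/∂t = (1/2)(B − xB + xB²), with B(0,x) = 1. -/

import Mathlib

open PowerSeries

noncomputable section

abbrev K : Type := RatFunc ℚ

/-- `x`, the variable of the coefficient field `ℚ(x)`. -/
abbrev x : K := RatFunc.X

/-- Formal exponential `exp S = ∑ Sⁿ/n!` of a power series (intended for `S` with zero
constant term, in which case the coefficientwise formula below is the usual one). -/
def psExp (S : PowerSeries K) : PowerSeries K :=
  PowerSeries.mk fun m =>
    ∑ n ∈ Finset.range (m + 1), (n.factorial : K)⁻¹ * PowerSeries.coeff (R := K) m (S ^ n)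

/-- Formal logarithm `log P = ∑_{n≥1} (−1)^{n+1} (P−1)ⁿ/n` of a power series (intended for
`P` with constant term `1`). -/
def psLog (P : PowerSeries K) : PowerSeries K :=
  PowerSeries.mk fun m =>
    ∑ n ∈ Finset.Icc 1 m, (-1 : K) ^ (n + 1) * (n : K)⁻¹ * PowerSeries.coeff (R := K) m ((P - 1) ^ n)

/-- Formal power `P^a := exp(a · log P)` for `a ∈ ℚ(x)`, for `P` with constant term `1`. -/
def psPow (a : K) (P : PowerSeries K) : PowerSeries K :=
  psExp (PowerSeries.C (R := K) a * psLog P)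

end

noncomputable section
open PowerSeries

instance : CharZero K :=
  charZero_of_injective_algebraMap (IsFractionRing.injective (Polynomial ℚ) (RatFunc ℚ))

lemma coeff_pow_mul_eq_zero {S H : PowerSeries K} (hS : constantCoeff (R := K) S = 0)
    {m n : ℕ} (h : m < n) : coeff (R := K) m (S ^ n * H) = 0 := by
  have hd : (X : PowerSeries K) ^ n ∣ S ^ n * H :=
    dvd_mul_of_dvd_left (pow_dvd_pow_of_dvd (X_dvd_iff.mpr hS) n) H
  exact (X_pow_dvd_iff.mp hd) m h

lemma coeff_pow_eq_zero {S : PowerSeries K} (hS : constantCoeff (R := K) S = 0)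
    {m n : ℕ} (h : m < n) : coeff (R := K) m (S ^ n) = 0 := by
  simpa using coeff_pow_mul_eq_zero (H := 1) hS h

lemma coeff_mul_congr {F G : PowerSeries K} (H : PowerSeries K) (m : ℕ)
    (h : ∀ j ≤ m, coeff (R := K) j F = coeff (R := K) j G) :
    coeff (R := K) m (H * F) = coeff (R := K) m (H * G) := by
  rw [coeff_mul, coeff_mul]
  refine Finset.sum_congr rfl fun p hp => ?_
  rw [h p.2 (Finset.HasAntidiagonal.antidiagonal.snd_le hp)]

lemma coeff_derivativeFun' (f : PowerSeries K) (n : ℕ) :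
    coeff (R := K) n (derivativeFun f) = coeff (R := K) (n+1) f * (n+1) :=
  coeff_derivative f n

lemma derivativeFun_C' (c : K) : derivativeFun (C (R := K) c) = 0 := derivative_C

lemma derivativeFun_pow (S : PowerSeries K) (n : ℕ) :
    derivativeFun (S ^ (n+1)) = C (R := K) ((n:K)+1) * (S ^ n * derivativeFun S) := by
  induction n with
  | zero => simp
  | succ k ih =>
    rw [pow_succ, derivativeFun_mul, ih]
    simp only [smul_eq_mul, PowerSeries.smul_eq_C_mul]
    push_cast
    simp only [map_add, map_one]
    ring


lemma psExp_coeff_trunc {S : PowerSeries K} (hS : constantCoeff (R := K) S = 0) {m j : ℕ} (hj : j ≤ m) :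
    coeff (R := K) j (psExp S) =
      coeff (R := K) j (∑ k ∈ Finset.range (m+1), C (R := K) ((k.factorial : K)⁻¹) * S ^ k) := by
  simp only [psExp, coeff_mk, map_sum, coeff_C_mul]
  refine Finset.sum_subset (Finset.range_subset_range.mpr (by omega)) fun k hk hk' => ?_
  rw [coeff_pow_eq_zero hS (by simp at hk hk'; omega), mul_zero]

lemma constantCoeff_psExp (S : PowerSeries K) : constantCoeff (R := K) (psExp S) = 1 := by
  rw [← coeff_zero_eq_constantCoeff_apply]
  simp [psExp, coeff_mk]

lemma derivativeFun_psExp {S : PowerSeries K} (hS : constantCoeff (R := K) S = 0) :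
    derivativeFun (psExp S) = derivativeFun S * psExp S := by
  ext m
  set T : PowerSeries K := ∑ k ∈ Finset.range (m+1), C (R := K) ((k.factorial : K)⁻¹) * S ^ k with hT
  have hRHS : coeff (R := K) m (derivativeFun S * psExp S) = coeff (R := K) m (T * derivativeFun S) := by
    rw [coeff_mul_congr (derivativeFun S) m fun j hj => psExp_coeff_trunc hS hj, mul_comm]
  rw [hRHS, coeff_derivativeFun']
  have expand : coeff (R := K) (m+1) (psExp S) * ((m:K)+1)
      = ∑ n ∈ Finset.range (m+2), (n.factorial : K)⁻¹ * coeff (R := K) m (derivativeFun (S ^ n)) := by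
    rw [psExp, coeff_mk, Finset.sum_mul]
    refine Finset.sum_congr rfl fun n _ => ?_
    rw [coeff_derivativeFun']
    push_cast
    ring
  rw [show ((m:K)+1) = ((m:K)+1) from rfl] at expand
  push_cast at expand ⊢
  rw [expand, Finset.sum_range_succ']
  simp only [pow_zero, derivativeFun_one, map_zero, mul_zero, add_zero]
  rw [hT, Finset.sum_mul, map_sum]
  refine Finset.sum_congr rfl fun k _ => ?_
  rw [derivativeFun_pow, coeff_C_mul, mul_assoc, coeff_C_mul]
  have hfac : ((k+1).factorial : K) = ((k:K)+1) * (k.factorial : K) := by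
    rw [Nat.factorial_succ]; push_cast; ring
  rw [hfac]
  have h1 : ((k:K)+1) ≠ 0 := by
    have : ((k+1 : ℕ) : K) ≠ 0 := Nat.cast_ne_zero.mpr (Nat.succ_ne_zero k)
    push_cast at this; exact this
  have h2 : (k.factorial : K) ≠ 0 := Nat.cast_ne_zero.mpr k.factorial_ne_zero
  field_simp

lemma constantCoeff_psLog (P : PowerSeries K) : constantCoeff (R := K) (psLog P) = 0 := by
  rw [← coeff_zero_eq_constantCoeff_apply]
  simp [psLog, coeff_mk]

lemma derivativeFun_sub_one (A : PowerSeries K) :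
    derivativeFun (A - 1) = derivativeFun A := by
  ext n
  simp [coeff_derivativeFun', map_sub, coeff_one]

lemma mul_derivativeFun_psLog {A : PowerSeries K} (hA : constantCoeff (R := K) A = 1) :
    A * derivativeFun (psLog A) = derivativeFun A := by
  set D : PowerSeries K := A - 1 with hDdef
  have hD : constantCoeff (R := K) D = 0 := by simp [hDdef, hA]
  have hDpow : ∀ k : ℕ, (-D) ^ k = C (R := K) ((-1 : K) ^ k) * D ^ k := by
    intro k
    rw [neg_pow, map_pow, map_neg, map_one]
  ext m
  set G : PowerSeries K := ∑ k ∈ Finset.range (m+1), (-D) ^ k with hG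
  -- Step 1: coefficients of L' agree with those of G * D' up to degree m
  have step1 : ∀ j ≤ m, coeff (R := K) j (derivativeFun (psLog A))
      = coeff (R := K) j (G * derivativeFun D) := by
    intro j hj
    have hGD : coeff (R := K) j (G * derivativeFun D)
        = ∑ k ∈ Finset.range (m+1), (-1 : K)^k * coeff (R := K) j (D^k * derivativeFun D) := by
      rw [hG, Finset.sum_mul, map_sum]
      refine Finset.sum_congr rfl fun k _ => ?_
      rw [hDpow, mul_assoc, coeff_C_mul]
    have hshrink : ∑ k ∈ Finset.range (m+1), (-1 : K)^k * coeff (R := K) j (D^k * derivativeFun D)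
        = ∑ k ∈ Finset.range (j+1), (-1 : K)^k * coeff (R := K) j (D^k * derivativeFun D) := by
      refine (Finset.sum_subset (Finset.range_subset_range.mpr (by omega)) fun k hk hk' => ?_).symm
      rw [coeff_pow_mul_eq_zero hD (by simp at hk hk'; omega), mul_zero]
    rw [hGD, hshrink, coeff_derivativeFun', psLog, coeff_mk, Finset.sum_mul]
    rw [← Finset.Ico_add_one_right_eq_Icc, Finset.sum_Ico_eq_sum_range]
    simp only [Nat.add_sub_cancel, Nat.succ_sub_one]
    refine Finset.sum_congr rfl fun k hk => ?_
    have hkfact : coeff (R := K) (j+1) (D ^ (1+k)) * ((j:K)+1)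
        = coeff (R := K) j (derivativeFun (D ^ (1+k))) := (coeff_derivativeFun' _ _).symm
    have h1k : 1 + k = k + 1 := by omega
    calc (-1:K)^(1+k+1) * ((1+k : ℕ):K)⁻¹ * coeff (R := K) (j+1) ((A-1)^(1+k)) * ((j:K)+1)
        = (-1:K)^(1+k+1) * ((1+k : ℕ):K)⁻¹ * (coeff (R := K) (j+1) (D^(1+k)) * ((j:K)+1)) := by
          rw [← hDdef]; ring
      _ = (-1:K)^(1+k+1) * ((1+k : ℕ):K)⁻¹ * coeff (R := K) j (derivativeFun (D ^ (1+k))) := by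
          rw [hkfact]
      _ = (-1:K)^k * coeff (R := K) j (D^k * derivativeFun D) := by
          rw [h1k, derivativeFun_pow, coeff_C_mul]
          have hne : ((k:K)+1) ≠ 0 := by
            have : ((k+1 : ℕ) : K) ≠ 0 := Nat.cast_ne_zero.mpr (Nat.succ_ne_zero k)
            push_cast at this; exact this
          have hpow : (-1:K)^(k+1+1) = (-1:K)^k := by
            rw [pow_succ, pow_succ]; ring
          push_cast
          rw [hpow]
          field_simp
  -- Step 2
  rw [coeff_mul_congr A m step1]
  have hAD : A = 1 + D := by rw [hDdef]; ring
  have hgeom : A * G = 1 - (-D)^(m+1) := by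
    have := geom_sum_mul (-D) (m+1)
    rw [hG, hAD]
    linear_combination -this
  rw [← mul_assoc, hgeom, sub_mul, one_mul, map_sub,
    coeff_pow_mul_eq_zero (by simp [hD]) (Nat.lt_succ_self m), sub_zero,
    hDdef, derivativeFun_sub_one]


lemma manin_ode (a : ℕ → K) (ha0 : a 0 = 1) (ha1 : a 1 = 1)
    (ha : ∀ n : ℕ, 2 ≤ n → a n = a (n - 1) +
      x * ∑ j ∈ Finset.Icc 2 (n - 1), ((n - 1).choose j : K) * a j * a (n - j))
    (A : PowerSeries K) (hA : A = PowerSeries.mk fun n => (n.factorial : K)⁻¹ * a n) :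
    (C (R := K) (1 + x) + C (R := K) x * X - C (R := K) x * A) * derivativeFun A = A := by
  have hfacne : ∀ j : ℕ, (j.factorial : K) ≠ 0 :=
    fun j => Nat.cast_ne_zero.mpr j.factorial_ne_zero
  have hjne : ∀ j : ℕ, ((j : K) + 1) ≠ 0 := by
    intro j
    have : ((j + 1 : ℕ) : K) ≠ 0 := Nat.cast_ne_zero.mpr (Nat.succ_ne_zero j)
    push_cast at this; exact this
  have hcA : ∀ j, coeff (R := K) j A = (j.factorial : K)⁻¹ * a j := by
    intro j; rw [hA, coeff_mk]
  have hcA' : ∀ j, coeff (R := K) j (derivativeFun A) = (j.factorial : K)⁻¹ * a (j+1) := by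
    intro j
    rw [coeff_derivativeFun', hcA, Nat.factorial_succ]
    have h1 := hjne j
    have h2 := hfacne j
    push_cast
    field_simp
  ext n
  rw [sub_mul, add_mul, map_sub, map_add, mul_assoc (C (R := K) x) X, mul_assoc (C (R := K) x) A,
    coeff_C_mul, coeff_C_mul, coeff_C_mul]
  have hAA' : coeff (R := K) n (A * derivativeFun A) =
      ∑ i ∈ Finset.range (n+1),
        ((i.factorial : K)⁻¹ * a i) * ((((n-i).factorial : K))⁻¹ * a (n-i+1)) := by
    rw [coeff_mul, Finset.Nat.sum_antidiagonal_eq_sum_range_succ_mk]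
    exact Finset.sum_congr rfl fun i _ => by rw [hcA, hcA']
  rw [hAA']
  cases n with
  | zero =>
    have hX0 : coeff (R := K) 0 (X * derivativeFun A) = 0 := by
      rw [mul_comm, coeff_zero_mul_X]
    rw [hX0, hcA', hcA]
    simp [ha0, ha1]
  | succ k =>
    rw [coeff_succ_X_mul, hcA', hcA', hcA]
    rw [Finset.sum_range_succ', Finset.sum_range_succ']
    have hrec := ha (k+2) (by omega)
    have h1 : k+2-1 = k+1 := by omega
    rw [h1] at hrec
    have hIcc : ∑ j ∈ Finset.Icc 2 (k+1), ((k+1).choose j : K) * a j * a (k+2-j)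
        = ∑ i ∈ Finset.range k, ((k+1).choose (i+2) : K) * a (i+2) * a (k-i) := by
      rw [← Finset.Ico_add_one_right_eq_Icc, Finset.sum_Ico_eq_sum_range]
      have hk : k + 1 + 1 - 2 = k := by omega
      rw [hk]
      refine Finset.sum_congr rfl fun i hi => ?_
      simp only [Finset.mem_range] at hi
      have e1 : 2 + i = i + 2 := by omega
      have e2 : k + 2 - (i + 2) = k - i := by omega
      rw [e1, e2]
    rw [hIcc] at hrec
    have hterm : ∀ i ∈ Finset.range k,
        (((i+1+1).factorial : K)⁻¹ * a (i+1+1)) *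
          ((((k+1-(i+1+1)).factorial : K))⁻¹ * a (k+1-(i+1+1)+1))
        = ((k+1).factorial : K)⁻¹ * (((k+1).choose (i+2) : K) * a (i+2) * a (k-i)) := by
      intro i hi
      simp only [Finset.mem_range] at hi
      have e1 : k+1-(i+1+1) = k-1-i := by omega
      have e2 : k-1-i+1 = k-i := by omega
      have e3 : k+1-(i+2) = k-1-i := by omega
      have hch := Nat.choose_mul_factorial_mul_factorial (show i+2 ≤ k+1 by omega)
      rw [e3] at hch
      have hch' : (((k+1).choose (i+2) : ℕ) : K) * ((i+2).factorial : K) * ((k-1-i).factorial : K)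
          = ((k+1).factorial : K) := by exact_mod_cast congrArg (Nat.cast : ℕ → K) hch
      have n1 := hfacne (i+2)
      have n2 := hfacne (k-1-i)
      have n3 := hfacne (k+1)
      rw [e1, e2]
      show ((i+2).factorial : K)⁻¹ * a (i+2) * (((k-1-i).factorial : K)⁻¹ * a (k-i)) = _
      field_simp
      linear_combination (-(a (i+2) * a (k-i))) * hch'
    rw [Finset.sum_congr rfl hterm, ← Finset.mul_sum]
    simp only [ha0, ha1, Nat.factorial_one, Nat.factorial_zero, Nat.cast_one,
      Nat.add_sub_cancel, Nat.sub_zero, inv_one, one_mul, mul_one, zero_add]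
    linear_combination (((k+1).factorial : K)⁻¹) * hrec

lemma derivativeFun_sub_C (f : PowerSeries K) (c : K) :
    derivativeFun (f - C (R := K) c) = derivativeFun f := by
  have h : f - C (R := K) c = f + C (R := K) (-c) := by rw [map_neg]; ring
  rw [h, derivativeFun_add, derivativeFun_C', add_zero]


lemma one_sub_x_ne : (1 - x : K) ≠ 0 := by
  intro h
  have hx : (x : K) = 1 := by linear_combination -h
  have : (algebraMap (Polynomial ℚ) (RatFunc ℚ)) Polynomial.X
      = (algebraMap (Polynomial ℚ) (RatFunc ℚ)) 1 := by
    rw [map_one]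
    exact hx
  have h2 := IsFractionRing.injective (Polynomial ℚ) (RatFunc ℚ) this
  have h3 := congrArg (fun p => Polynomial.coeff p 1) h2
  simp only [Polynomial.coeff_X_one, Polynomial.coeff_one] at h3
  norm_num at h3


end
/-- Differential equation for :
 with . -/
theorem differential_equation_for_B
    (a : ℕ → K) (ha0 : a 0 = 1) (ha1 : a 1 = 1)
    (ha : ∀ n : ℕ, 2 ≤ n → a n = a (n - 1) +
      x * ∑ j ∈ Finset.Icc 2 (n - 1), ((n - 1).choose j : K) * a j * a (n - j))
    (A : PowerSeries K) (hA : A = PowerSeries.mk fun n => (n.factorial : K)⁻¹ * a n)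
    (B : PowerSeries K)
    (hB : B = PowerSeries.C (R := K) (1 - x) * (psPow ((x - 1) / 2) A - PowerSeries.C (R := K) x)⁻¹) :
    (PowerSeries.C (R := K) (1 + x) + PowerSeries.C (R := K) x * PowerSeries.X - PowerSeries.C (R := K) x * A) *
        B.derivativeFun =
      PowerSeries.C (R := K) (2 : K)⁻¹ * (B - PowerSeries.C (R := K) x * B + PowerSeries.C (R := K) x * B ^ 2) ∧
    PowerSeries.constantCoeff (R := K) B = 1 := by
  have hccA : constantCoeff (R := K) A = 1 := by
    rw [hA, ← coeff_zero_eq_constantCoeff_apply, coeff_mk]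
    simp [ha0]
  have hAne : A ≠ 0 := fun h => by simp [h] at hccA
  set g : K := (x - 1) / 2 with hgdef
  set P : PowerSeries K := psPow g A with hPdef
  set Q : PowerSeries K := C (R := K) (1 + x) + C (R := K) x * X - C (R := K) x * A with hQdef
  have hode : Q * derivativeFun A = A := manin_ode a ha0 ha1 ha A hA
  have hlog : A * derivativeFun (psLog A) = derivativeFun A := mul_derivativeFun_psLog hccA
  have hS0 : constantCoeff (R := K) (C (R := K) g * psLog A) = 0 := by
    rw [map_mul, constantCoeff_psLog, mul_zero]
  have hPexp : P = psExp (C (R := K) g * psLog A) := rfl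
  have hPd : derivativeFun P = C (R := K) g * derivativeFun (psLog A) * P := by
    rw [hPexp, derivativeFun_psExp hS0, derivativeFun_mul, derivativeFun_C']
    simp only [smul_eq_mul]
    ring
  have hAP : A * derivativeFun P = C (R := K) g * derivativeFun A * P := by
    rw [hPd]
    linear_combination C (R := K) g * P * hlog
  have hQP : Q * derivativeFun P = C (R := K) g * P := by
    apply mul_left_cancel₀ hAne
    calc A * (Q * derivativeFun P) = Q * (A * derivativeFun P) := by ring
      _ = Q * (C (R := K) g * derivativeFun A * P) := by rw [hAP]
      _ = C (R := K) g * P * (Q * derivativeFun A) := by ring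
      _ = C (R := K) g * P * A := by rw [hode]
      _ = A * (C (R := K) g * P) := by ring
  have hccP : constantCoeff (R := K) P = 1 := constantCoeff_psExp _
  have hccU : constantCoeff (R := K) (P - C (R := K) x) = 1 - x := by
    rw [map_sub, hccP, constantCoeff_C]
  have hUne0 : constantCoeff (R := K) (P - C (R := K) x) ≠ 0 := by rw [hccU]; exact one_sub_x_ne
  have hUne : (P - C (R := K) x) ≠ 0 := fun h => by simp [h] at hUne0
  have hUU : (P - C (R := K) x) * (P - C (R := K) x)⁻¹ = 1 := PowerSeries.mul_inv_cancel _ hUne0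
  have hB' : B = C (R := K) (1 - x) * (P - C (R := K) x)⁻¹ := hB
  have hccB : constantCoeff (R := K) B = 1 := by
    rw [hB', map_mul, constantCoeff_C, PowerSeries.constantCoeff_inv, hccU,
      mul_inv_cancel₀ one_sub_x_ne]
  refine ⟨?_, hccB⟩
  have hUinv' : derivativeFun ((P - C (R := K) x)⁻¹)
      = -((P - C (R := K) x)⁻¹) ^ 2 * derivativeFun (P - C (R := K) x) := derivative_inv' _
  have hBd : derivativeFun B
      = C (R := K) (1 - x) * (-((P - C (R := K) x)⁻¹) ^ 2 * derivativeFun P) := by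
    rw [hB', derivativeFun_mul, derivativeFun_C', hUinv', derivativeFun_sub_C]
    simp only [smul_eq_mul]
    ring
  apply mul_left_cancel₀ (pow_ne_zero 2 hUne)
  have hBU : B * (P - C (R := K) x) = C (R := K) (1 - x) := by
    rw [hB']
    linear_combination C (R := K) (1 - x) * hUU
  have hU2B' : (P - C (R := K) x) ^ 2 * derivativeFun B = -(C (R := K) (1 - x)) * derivativeFun P := by
    rw [hBd]
    linear_combination (-(C (R := K) (1 - x) * derivativeFun P *
      ((P - C (R := K) x) * (P - C (R := K) x)⁻¹ + 1))) * hUU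
  have hc1x : (1 : PowerSeries K) - C (R := K) x = C (R := K) (1 - x) := by
    rw [map_sub, map_one]
  have hconst : C (R := K) (2 : K)⁻¹ * C (R := K) (1 - x) ^ 2 = -(C (R := K) (1 - x) * C (R := K) g) := by
    rw [← map_pow, ← map_mul, ← map_mul, ← map_neg]
    congr 1
    rw [hgdef]
    ring
  calc (P - C (R := K) x) ^ 2 * (Q * derivativeFun B)
      = Q * ((P - C (R := K) x) ^ 2 * derivativeFun B) := by ring
    _ = Q * (-(C (R := K) (1 - x)) * derivativeFun P) := by rw [hU2B']
    _ = -(C (R := K) (1 - x)) * (Q * derivativeFun P) := by ring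
    _ = -(C (R := K) (1 - x)) * (C (R := K) g * P) := by rw [hQP]
    _ = C (R := K) (2 : K)⁻¹ * C (R := K) (1 - x) ^ 2 * P := by rw [hconst]; ring
    _ = (P - C (R := K) x) ^ 2 *
        (C (R := K) (2 : K)⁻¹ * (B - C (R := K) x * B + C (R := K) x * B ^ 2)) := by
      linear_combination (C (R := K) (2:K)⁻¹ * ((P - C (R := K) x) - C (R := K) x * (P - C (R := K) x)
        + C (R := K) x * (B * (P - C (R := K) x) + C (R := K) (1 - x)))) * hBU.symm
        + (C (R := K) (2:K)⁻¹ * C (R := K) (1 - x) * (P - C (R := K) x)) * hc1x.symm
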